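/- arXiv:1703.03837 — 3 statements merged into one kernel-verified Lean document; each statement's English description precedes it below -/
import Mathlib

section
/- Let G be a group, O a normal subgroup of G, and K = ⁅O, G⁆. Let (L_i)_{i ≥ 1} denote the lower central series of G, so L₁ = G and L_{i+1} = ⁅L_i, G⁆. Then for every i ≥ 1 the following equality of subgroups of G holds: (O ∩ L_i) ∩ ((K ∩ L_i)·L_{i+1}) = (K·(O ∩ L_{i+1})) ∩ L_i. Here, for a normal subgroup N and a subgroup H, H·N denotes the subgroup generated by H and N (their join); since L_{i+1} and K are normal in G, both products (K ∩ L_i)·L_{i+1} and K·(O ∩ L_{i+1}) are subgroups of G. -/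
/-!
Both sides reduce to `(K ⊔ L_{i+1}) ⊓ O ⊓ L_i` by two applications of Dedekind's modular law
`(A ⊔ B) ⊓ C = A ⊔ (B ⊓ C)` for `A ≤ C`, which holds for subgroups once `A` is normal:
once with `A = L_{i+1} ≤ L_i`, and once with `A = K ≤ O`.
-/

namespace Subgroup

variable {G : Type*} [Group G]

theorem sup_inf_assoc_of_le_of_normal {A : Subgroup G} [A.Normal] (B : Subgroup G)
    {C : Subgroup G} (h : A ≤ C) : (A ⊔ B) ⊓ C = A ⊔ B ⊓ C :=
  SetLike.coe_injective <| by
    rw [coe_inf, normal_mul, normal_mul, mul_inf_assoc A B C h]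

theorem inf_inf_sup_eq_sup_inf_inf {K O L M : Subgroup G} [K.Normal] [M.Normal]
    (hKO : K ≤ O) (hML : M ≤ L) : O ⊓ L ⊓ (K ⊓ L ⊔ M) = (K ⊔ O ⊓ M) ⊓ L := by
  rw [sup_comm, ← sup_inf_assoc_of_le_of_normal K hML, sup_comm M,
    inf_comm O M, ← sup_inf_assoc_of_le_of_normal M hKO]
  ac_rfl

end Subgroup

/-- Let `G` be a group, `O` a normal subgroup of `G`, and `K = ⁅O, G⁆`.
Let `(L_i)_{i ≥ 1}` be the lower central series of `G`, so `L₁ = G` and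
`L_{i+1} = ⁅L_i, G⁆`; in Mathlib's indexing `L_{i+1} = (⊤ : Subgroup G).lowerCentralSeries i`.
Then for every `i ≥ 1` one has
`(O ∩ L_i) ∩ ((K ∩ L_i)·L_{i+1}) = (K·(O ∩ L_{i+1})) ∩ L_i`,
where the product of subgroups is their join. -/
theorem stmt5 {G : Type*} [Group G] (O : Subgroup G) (hO : O.Normal)
    (K : Subgroup G) (hK : K = ⁅O, (⊤ : Subgroup G)⁆) (i : ℕ) :
    (O ⊓ (⊤ : Subgroup G).lowerCentralSeries i) ⊓
        ((K ⊓ (⊤ : Subgroup G).lowerCentralSeries i) ⊔ (⊤ : Subgroup G).lowerCentralSeries (i + 1)) =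
      (K ⊔ (O ⊓ (⊤ : Subgroup G).lowerCentralSeries (i + 1))) ⊓ (⊤ : Subgroup G).lowerCentralSeries i := by
  subst hK
  exact Subgroup.inf_inf_sup_eq_sup_inf_inf (Subgroup.commutator_le_left O ⊤)
    (Subgroup.lowerCentralSeries_antitone ⊤ i.le_succ)
end

section
/- Let n ≥ 1, let φ₁, …, φₙ : [0,1] → ℂ be continuous, and let c ∈ [0,1]. Then the iterated integral decomposes at c as follows: ∫_{0 ≤ t₁ ≤ ⋯ ≤ tₙ ≤ 1} φ₁(t₁)⋯φₙ(tₙ) dt₁⋯dtₙ = Σ_{i=0}^{n} (∫_{0 ≤ t₁ ≤ ⋯ ≤ t_i ≤ c} φ₁(t₁)⋯φ_i(t_i) dt₁⋯dt_i) · (∫_{c ≤ t_{i+1} ≤ ⋯ ≤ tₙ ≤ 1} φ_{i+1}(t_{i+1})⋯φₙ(tₙ) dt_{i+1}⋯dtₙ), where an empty integral (i = 0 or i = n factor with no variables) is taken to be 1. -/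
/-!
Since the coordinates of a point of the simplex `a ≤ t₀ ≤ ⋯ ≤ tₙ₋₁ ≤ b` increase, those that are
`≤ c` form an initial segment. Hence the simplex is the union over `k ≤ n` of the closed pieces
where `t_j ≤ c` for `j < k` and `c ≤ t_j` for `j ≥ k`, and two distinct pieces meet only inside a
hyperplane `t_j = c`, a null set. Cutting a point of the `k`-th piece into its first `k` and last
`n - k` coordinates identifies the piece, measure-preservingly, with the product of the simplices
over `[a, c]` and `[c, b]`. The integrand factorises accordingly, so by Fubini the integral over
the `k`-th piece is the `k`-th term of the sum.
-/

open MeasureTheory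

/-- The iterated integral `I(φ₁,…,φₙ)` over the simplex
`{a ≤ t₁ ≤ ⋯ ≤ tₙ ≤ b} ⊂ ℝⁿ` of the product `φ₁(t₁)⋯φₙ(tₙ)`, with respect to
Lebesgue measure.  For `n = 0` it equals `1` by convention. -/
noncomputable def simplexIntegral (n : ℕ) (φ : Fin n → ℝ → ℂ) (a b : ℝ) : ℂ :=
  ∫ t : Fin n → ℝ in
    {t | (∀ i, a ≤ t i ∧ t i ≤ b) ∧ ∀ i j : Fin n, i ≤ j → t i ≤ t j},
    ∏ i, φ i (t i)

theorem Fin.monotone_append_iff {α : Type*} [Preorder α] {m n : ℕ} (x : Fin m → α)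
    (y : Fin n → α) :
    Monotone (Fin.append x y) ↔ Monotone x ∧ Monotone y ∧ ∀ i j, x i ≤ y j := by
  simp only [Monotone, Fin.forall_fin_add, Fin.append_left, Fin.append_right, Fin.le_def,
    Fin.val_castAdd, Fin.val_natAdd]
  constructor
  · rintro ⟨hx, hy⟩
    exact ⟨fun i i' h => (hx i).1 i' h, fun j j' h => (hy j).2 j' (by omega),
      fun i j => (hx i).2 j (by omega)⟩
  · rintro ⟨hx, hy, hxy⟩
    exact ⟨fun i => ⟨fun _ h => hx h, fun j _ => hxy i j⟩,
      fun j => ⟨fun i h => absurd h (by omega), fun _ h => hy (by omega)⟩⟩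

theorem Fin.exists_le_iff_lt_of_monotone {α : Type*} [Preorder α] {n : ℕ} {t : Fin n → α}
    (ht : Monotone t) (c : α) : ∃ k ≤ n, ∀ j : Fin n, t j ≤ c ↔ (j : ℕ) < k := by
  rcases ((isLowerSet_Iic c).preimage ht).eq_univ_or_Iio with h | ⟨k, h⟩
  · refine ⟨n, le_rfl, fun j => ?_⟩
    have := Set.ext_iff.1 h j
    simp only [Set.mem_preimage, Set.mem_Iic, Set.mem_univ, iff_true] at this
    simp [this]
  · refine ⟨k, k.is_le', fun j => ?_⟩
    have := Set.ext_iff.1 h j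
    simpa only [Set.mem_preimage, Set.mem_Iic, Set.mem_Iio, Fin.lt_def] using this

def MeasurableEquiv.finAppend (α : Type*) [MeasurableSpace α] (m n : ℕ) :
    (Fin m → α) × (Fin n → α) ≃ᵐ (Fin (m + n) → α) :=
  (MeasurableEquiv.sumPiEquivProdPi fun _ => α).symm.trans
    (MeasurableEquiv.piCongrLeft (fun _ => α) finSumFinEquiv)

theorem MeasurableEquiv.finAppend_apply {α : Type*} [MeasurableSpace α] {m n : ℕ}
    (p : (Fin m → α) × (Fin n → α)) :
    MeasurableEquiv.finAppend α m n p = Fin.append p.1 p.2 := by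
  ext i
  refine Fin.addCases (fun i => ?_) (fun j => ?_) i
  · rw [Fin.append_left]
    exact Equiv.piCongrLeft_sumInl (fun _ => α) finSumFinEquiv p.1 p.2 i
  · rw [Fin.append_right]
    exact Equiv.piCongrLeft_sumInr (fun _ => α) finSumFinEquiv p.1 p.2 j

theorem MeasureTheory.volume_measurePreserving_finAppend (α : Type*) [MeasureSpace α]
    [SigmaFinite (volume : Measure α)] (m n : ℕ) :
    MeasurePreserving (MeasurableEquiv.finAppend α m n) volume volume :=
  (volume_measurePreserving_piCongrLeft (fun _ => α) finSumFinEquiv).comp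
    (volume_measurePreserving_sumPiEquivProdPi_symm fun _ => α)

def simplex (n : ℕ) (a b : ℝ) : Set (Fin n → ℝ) :=
  {t | (∀ i, a ≤ t i ∧ t i ≤ b) ∧ Monotone t}

theorem simplexIntegral_eq_setIntegral (n : ℕ) (φ : Fin n → ℝ → ℂ) (a b : ℝ) :
    simplexIntegral n φ a b = ∫ t in simplex n a b, ∏ i, φ i (t i) := rfl

theorem simplex_eq_Icc_inter (n : ℕ) (a b : ℝ) :
    simplex n a b = Set.Icc (fun _ => a) (fun _ => b) ∩ {t | Monotone t} := by
  ext t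
  simp only [simplex, Set.mem_ofPred_eq, Set.mem_inter_iff, Set.mem_Icc, Pi.le_def, forall_and]

theorem isCompact_simplex (n : ℕ) (a b : ℝ) : IsCompact (simplex n a b) := by
  rw [simplex_eq_Icc_inter]
  exact isCompact_Icc.inter_right isClosed_monotone

theorem integrableOn_simplex {n : ℕ} {φ : Fin n → ℝ → ℂ} {a b : ℝ}
    (hφ : ∀ i, ContinuousOn (φ i) (Set.Icc a b)) :
    IntegrableOn (fun t => ∏ i, φ i (t i)) (simplex n a b) :=
  (continuousOn_finsetProd _ fun i _ => (hφ i).comp (continuous_apply i).continuousOn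
    fun _ ht => ht.1 i).integrableOn_compact (isCompact_simplex n a b)

def simplexPiece (n k : ℕ) (a b c : ℝ) : Set (Fin n → ℝ) :=
  simplex n a b ∩ {j : Fin n | (j : ℕ) < k}.pi (fun _ => Set.Iic c) ∩
    {j : Fin n | k ≤ (j : ℕ)}.pi (fun _ => Set.Ici c)

theorem isClosed_simplexPiece (n k : ℕ) (a b c : ℝ) : IsClosed (simplexPiece n k a b c) :=
  ((isCompact_simplex n a b).isClosed.inter (isClosed_set_pi fun _ _ => isClosed_Iic)).inter
    (isClosed_set_pi fun _ _ => isClosed_Ici)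

theorem simplex_eq_iUnion_simplexPiece (n : ℕ) (a b c : ℝ) :
    simplex n a b = ⋃ k : Fin (n + 1), simplexPiece n k a b c := by
  ext t
  simp only [Set.mem_iUnion]
  constructor
  · intro ht
    obtain ⟨k, hkn, hk⟩ := Fin.exists_le_iff_lt_of_monotone ht.2 c
    exact ⟨⟨k, by omega⟩, ⟨ht, fun j hj => (hk j).2 hj⟩,
      fun j hj => le_of_not_ge fun h => ((hk j).1 h).not_ge hj⟩
  · rintro ⟨k, ⟨ht, -⟩, -⟩
    exact ht

theorem simplexPiece_inter_simplexPiece_subset {n k l : ℕ} (hkl : k < l) (hl : l ≤ n)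
    (a b c : ℝ) :
    simplexPiece n k a b c ∩ simplexPiece n l a b c ⊆ {t | t ⟨k, by omega⟩ = c} :=
  fun _ ⟨⟨⟨_, _⟩, hk⟩, ⟨_, hl⟩, _⟩ => le_antisymm (hl _ hkl) (hk _ (le_refl k))

theorem pairwise_aedisjoint_simplexPiece (n : ℕ) (a b c : ℝ) :
    Pairwise (Function.onFun (AEDisjoint volume)
      fun k : Fin (n + 1) => simplexPiece n k a b c) := by
  have of_lt : ∀ k l : Fin (n + 1), k < l →
      AEDisjoint volume (simplexPiece n k a b c) (simplexPiece n l a b c) := fun k l hkl =>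
    measure_mono_null (simplexPiece_inter_simplexPiece_subset hkl (by omega) a b c) <| by
      rw [volume_pi]
      exact Measure.pi_hyperplane (fun _ => (volume : Measure ℝ)) _ c
  intro k l hkl
  rcases hkl.lt_or_gt with h | h
  · exact of_lt k l h
  · exact (of_lt l k h).symm

theorem append_mem_simplexPiece_iff {i m : ℕ} {a b c : ℝ} (hac : a ≤ c) (hcb : c ≤ b)
    (x : Fin i → ℝ) (y : Fin m → ℝ) :
    Fin.append x y ∈ simplexPiece (i + m) i a b c ↔ x ∈ simplex i a c ∧ y ∈ simplex m c b := by
  simp only [simplexPiece, simplex, Set.mem_inter_iff, Set.mem_pi, Set.mem_ofPred_eq,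
    Fin.monotone_append_iff, Fin.forall_fin_add, Fin.append_left, Fin.append_right,
    Fin.val_castAdd, Fin.val_natAdd, Set.mem_Iic, Set.mem_Ici]
  constructor
  · rintro ⟨⟨⟨⟨hx, hy⟩, hxm, hym, -⟩, hxc, -⟩, -, hcy⟩
    exact ⟨⟨fun j => ⟨(hx j).1, hxc j j.2⟩, hxm⟩, fun j => ⟨hcy j (by omega), (hy j).2⟩, hym⟩
  · rintro ⟨⟨hx, hxm⟩, hy, hym⟩
    refine ⟨⟨⟨⟨fun j => ⟨(hx j).1, (hx j).2.trans hcb⟩, fun j => ⟨hac.trans (hy j).1, (hy j).2⟩⟩,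
      hxm, hym, fun j j' => (hx j).2.trans (hy j').1⟩, fun j _ => (hx j).2, fun j h => by omega⟩,
      fun j h => by omega, fun j _ => (hy j).1⟩

theorem setIntegral_simplexPiece {n i m : ℕ} (h : i + m = n) {a b c : ℝ} (hac : a ≤ c)
    (hcb : c ≤ b) (φ : Fin n → ℝ → ℂ) :
    ∫ t in simplexPiece n i a b c, ∏ j, φ j (t j) =
      simplexIntegral i (fun j => φ ⟨j, by omega⟩) a c *
        simplexIntegral m (fun j => φ ⟨i + j, by omega⟩) c b := by
  subst h
  have hpre : MeasurableEquiv.finAppend ℝ i m ⁻¹' simplexPiece (i + m) i a b c =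
      simplex i a c ×ˢ simplex m c b := by
    ext p
    simp only [Set.mem_preimage, MeasurableEquiv.finAppend_apply,
      append_mem_simplexPiece_iff hac hcb, Set.mem_prod]
  rw [← (volume_measurePreserving_finAppend ℝ i m).setIntegral_preimage_emb
    (MeasurableEquiv.measurableEmbedding _), hpre, Measure.volume_eq_prod]
  simp only [MeasurableEquiv.finAppend_apply, Fin.prod_univ_add, Fin.append_left,
    Fin.append_right]
  exact setIntegral_prod_mul (fun x : Fin i → ℝ => ∏ j, φ (Fin.castAdd m j) (x j))
    (fun y : Fin m → ℝ => ∏ j, φ (Fin.natAdd i j) (y j)) _ _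

theorem simplexIntegral_eq_sum_mul {n : ℕ} {φ : Fin n → ℝ → ℂ} {a b c : ℝ}
    (hφ : ∀ i, ContinuousOn (φ i) (Set.Icc a b)) (hac : a ≤ c) (hcb : c ≤ b) :
    simplexIntegral n φ a b = ∑ k : Fin (n + 1),
        simplexIntegral k (fun j => φ ⟨j, j.2.trans_le (Nat.lt_add_one_iff.mp k.2)⟩) a c *
          simplexIntegral (n - k) (fun j => φ ⟨k + j, Nat.add_lt_of_lt_sub' j.2⟩) c b := by
  rw [simplexIntegral_eq_setIntegral, simplex_eq_iUnion_simplexPiece n a b c,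
    integral_iUnion_ae (s := fun k : Fin (n + 1) => simplexPiece n k a b c)
      (fun k => (isClosed_simplexPiece n k a b c).measurableSet.nullMeasurableSet)
      (pairwise_aedisjoint_simplexPiece n a b c)
      (simplex_eq_iUnion_simplexPiece n a b c ▸ integrableOn_simplex hφ),
    tsum_fintype]
  exact Finset.sum_congr rfl fun k _ => setIntegral_simplexPiece (by omega) hac hcb φ

/-- decomposition of an iterated integral at an intermediate point
`c ∈ [0,1]` (Chen's formula for the concatenation of two paths):
`I(φ₁,…,φₙ)₀¹ = Σ_{i=0}^{n} I(φ₁,…,φ_i)₀ᶜ · I(φ_{i+1},…,φₙ)_c¹`. -/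
theorem stmt7 (n : ℕ) (φ : Fin n → ℝ → ℂ)
    (hφ : ∀ i, ContinuousOn (φ i) (Set.Icc 0 1))
    (c : ℝ) (hc : c ∈ Set.Icc (0 : ℝ) 1) :
    simplexIntegral n φ 0 1 =
      ∑ i : Fin (n + 1),
        simplexIntegral i.1 (fun j => φ ⟨j.1, by omega⟩) 0 c *
          simplexIntegral (n - i.1) (fun j => φ ⟨i.1 + j.1, by omega⟩) c 1 := by
  exact simplexIntegral_eq_sum_mul hφ hc.1 hc.2
end

section
/- Let f₁, f₂, g₁, g₂ : [0,1] → ℂ be continuous. Define h₁, h₂ : [0,4] → ℂ piecewise by h_i(t) = f_i(t) for t ∈ [0,1], h_i(t) = g_i(t−1) for t ∈ (1,2], h_i(t) = −f_i(3−t) for t ∈ (2,3], and h_i(t) = −g_i(4−t) for t ∈ (3,4]. Then the length-two iterated integral along this commutator concatenation equals a determinant of periods: ∫_{0 ≤ t₁ ≤ t₂ ≤ 4} h₁(t₁)·h₂(t₂) dt₁dt₂ = (∫₀¹ f₁)(∫₀¹ g₂) − (∫₀¹ g₁)(∫₀¹ f₂). -/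
open MeasureTheory

/-- The pullback along the commutator concatenation `γσγ⁻¹σ⁻¹`, parametrized on
`[0,4]`: `h(t) = f(t)` on `[0,1]`, `h(t) = g(t−1)` on `(1,2]`, `h(t) = −f(3−t)`
on `(2,3]`, and `h(t) = −g(4−t)` on `(3,4]`. -/
noncomputable def commPiece (f g : ℝ → ℂ) (t : ℝ) : ℂ :=
  if t ≤ 1 then f t
  else if t ≤ 2 then g (t - 1)
  else if t ≤ 3 then -f (3 - t)
  else -g (4 - t)

/-! By Fubini the simplex integral is the iterated interval integral
`I(h₁, h₂) = ∫₀⁴ (∫₀ʸ h₁) h₂(y) dy`. Cut `[0,4]` into the four unit pieces of the loop: by Chen's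
formula, `I(h₁, h₂)` is the sum of the iterated integrals over the pieces plus the products
`(∫_{piece k} h₁)(∫_{piece l} h₂)` for `k < l`. Translation leaves iterated integrals unchanged,
and reversal turns `I(f₁, f₂)` into `(∫f₁)(∫f₂) − I(f₁, f₂)`, so the four piece terms add up to
`(∫f₁)(∫f₂) + (∫g₁)(∫g₂)`; the cross terms cancel this and leave the determinant of periods. -/

open Set

noncomputable def iteratedIntegral (φ ψ : ℝ → ℂ) (a b : ℝ) : ℂ :=
  ∫ y in a..b, (∫ x in a..y, φ x) * ψ y

section IteratedIntegral

open intervalIntegral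

variable {φ ψ φ' ψ' : ℝ → ℂ} {a b c : ℝ}

theorem iteratedIntegral_congr (hab : a ≤ b) (hφ : EqOn φ φ' (Ioo a b))
    (hψ : EqOn ψ ψ' (Ioo a b)) : iteratedIntegral φ ψ a b = iteratedIntegral φ' ψ' a b :=
  integral_congr_Ioo_of_le hab fun y hy => by
    rw [integral_congr_Ioo_of_le hy.1.le (hφ.mono (Ioo_subset_Ioo_right hy.2.le)), hψ hy]

theorem iteratedIntegral_comp_sub_right (d : ℝ) :
    iteratedIntegral (fun t => φ (t - d)) (fun t => ψ (t - d)) a b =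
      iteratedIntegral φ ψ (a - d) (b - d) := by
  simp only [iteratedIntegral, integral_comp_sub_right fun x => φ x]
  exact integral_comp_sub_right (fun s => (∫ x in a - d..s, φ x) * ψ s) d

theorem iteratedIntegral_comp_sub_left (c : ℝ) (hφ : IntervalIntegrable φ volume (c - b) (c - a))
    (hψ : IntervalIntegrable ψ volume (c - b) (c - a)) :
    iteratedIntegral (fun t => -φ (c - t)) (fun t => -ψ (c - t)) a b =
      (∫ x in c - b..c - a, φ x) * (∫ x in c - b..c - a, ψ x) -
        iteratedIntegral φ ψ (c - b) (c - a) := by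
  set P := ∫ x in c - b..c - a, φ x
  have hprim : ContinuousOn (fun s => ∫ x in c - b..s, φ x) (uIcc (c - b) (c - a)) :=
    continuousOn_primitive_interval' hφ left_mem_uIcc
  have hinner : ∀ y ∈ uIcc a b, (∫ x in a..y, -φ (c - x)) * -ψ (c - y) =
      (P - ∫ x in c - b..c - y, φ x) * ψ (c - y) := fun y hy => by
    have hcy : c - y ∈ uIcc (c - b) (c - a) := by
      rw [mem_uIcc] at hy ⊢; grind
    rw [integral_interval_sub_left hφ (hφ.mono_set (uIcc_subset_uIcc_left hcy)),
      intervalIntegral.integral_neg, integral_comp_sub_left fun x => φ x, neg_mul_neg]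
  rw [iteratedIntegral, integral_congr hinner,
    integral_comp_sub_left (fun s => (P - ∫ x in c - b..s, φ x) * ψ s) c]
  simp only [sub_mul]
  rw [intervalIntegral.integral_sub (hψ.const_mul P) (hψ.continuousOn_mul hprim),
    intervalIntegral.integral_const_mul, iteratedIntegral]

theorem iteratedIntegral_add_adjacent_intervals (hφab : IntervalIntegrable φ volume a b)
    (hφbc : IntervalIntegrable φ volume b c) (hψab : IntervalIntegrable ψ volume a b)
    (hψbc : IntervalIntegrable ψ volume b c) :
    iteratedIntegral φ ψ a c = iteratedIntegral φ ψ a b + iteratedIntegral φ ψ b c +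
      (∫ x in a..b, φ x) * ∫ x in b..c, ψ x := by
  set P := ∫ x in a..b, φ x
  have hsplit : EqOn (fun y => (∫ x in a..y, φ x) * ψ y)
      (fun y => P * ψ y + (∫ x in b..y, φ x) * ψ y) (uIcc b c) := fun y hy => by
    dsimp only
    rw [← integral_add_adjacent_intervals hφab (hφbc.mono_set (uIcc_subset_uIcc_left hy)),
      add_mul]
  have hprimB_bc : IntervalIntegrable (fun y => (∫ x in b..y, φ x) * ψ y) volume b c :=
    hψbc.continuousOn_mul (continuousOn_primitive_interval' hφbc left_mem_uIcc)
  have hprimA_ab : IntervalIntegrable (fun y => (∫ x in a..y, φ x) * ψ y) volume a b :=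
    hψab.continuousOn_mul (continuousOn_primitive_interval' hφab left_mem_uIcc)
  have hprimA_bc : IntervalIntegrable (fun y => (∫ x in a..y, φ x) * ψ y) volume b c :=
    ((hψbc.const_mul P).add hprimB_bc).congr (hsplit.symm.mono uIoc_subset_uIcc)
  rw [iteratedIntegral, ← integral_add_adjacent_intervals hprimA_ab hprimA_bc, integral_congr hsplit,
    intervalIntegral.integral_add (hψbc.const_mul P) hprimB_bc, intervalIntegral.integral_const_mul,
    iteratedIntegral, iteratedIntegral]
  ring

end IteratedIntegral

section Simplex

variable {φ ψ : ℝ → ℂ} {a b : ℝ}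

theorem simplexIntegral_two :
    simplexIntegral 2 ![φ, ψ] a b =
      ∫ p : ℝ × ℝ in {p | a ≤ p.1 ∧ p.1 ≤ p.2 ∧ p.2 ≤ b}, φ p.1 * ψ p.2 := by
  have hset : {t : Fin 2 → ℝ | (∀ i, a ≤ t i ∧ t i ≤ b) ∧ ∀ i j : Fin 2, i ≤ j → t i ≤ t j} =
      MeasurableEquiv.finTwoArrow ⁻¹' {p : ℝ × ℝ | a ≤ p.1 ∧ p.1 ≤ p.2 ∧ p.2 ≤ b} := by
    ext t
    simp only [mem_ofPred_eq, mem_preimage, MeasurableEquiv.finTwoArrow_apply, Fin.forall_fin_two]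
    grind
  rw [simplexIntegral, hset, ← (volume_preserving_finTwoArrow ℝ).setIntegral_preimage_emb
    MeasurableEquiv.finTwoArrow.measurableEmbedding]
  simp [Fin.prod_univ_two]

theorem setIntegral_triangle_eq_iteratedIntegral (hab : a ≤ b) (hφ : IntegrableOn φ (Icc a b))
    (hψ : IntegrableOn ψ (Icc a b)) :
    ∫ p : ℝ × ℝ in {p | a ≤ p.1 ∧ p.1 ≤ p.2 ∧ p.2 ≤ b}, φ p.1 * ψ p.2 =
      iteratedIntegral φ ψ a b := by
  set T := {p : ℝ × ℝ | a ≤ p.1 ∧ p.1 ≤ p.2 ∧ p.2 ≤ b}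
  have hT : MeasurableSet T :=
    (measurableSet_le measurable_const measurable_fst).inter
      ((measurableSet_le measurable_fst measurable_snd).inter
        (measurableSet_le measurable_snd measurable_const))
  have hind : ∀ x y, T.indicator (fun p => φ p.1 * ψ p.2) (x, y) =
      (Icc a y).indicator φ x * (Icc a b).indicator ψ y := by
    intro x y
    simp only [T, indicator, mem_ofPred_eq, mem_Icc]
    split_ifs <;> grind
  have hint : Integrable (T.indicator fun p => φ p.1 * ψ p.2) (volume.prod volume) := by
    have hsquare : IntegrableOn (fun p : ℝ × ℝ => φ p.1 * ψ p.2) (Icc a b ×ˢ Icc a b) := by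
      rw [IntegrableOn, Measure.volume_eq_prod, ← Measure.prod_restrict]
      exact hφ.mul_prod hψ
    rw [integrable_indicator_iff hT, ← Measure.volume_eq_prod]
    exact hsquare.mono_set fun p hp => ⟨⟨hp.1, hp.2.1.trans hp.2.2⟩, ⟨hp.1.trans hp.2.1, hp.2.2⟩⟩
  calc ∫ p in T, φ p.1 * ψ p.2
      = ∫ y, ∫ x, T.indicator (fun p => φ p.1 * ψ p.2) (x, y) := by
        rw [← integral_indicator hT, Measure.volume_eq_prod, integral_prod_symm _ hint]
    _ = ∫ y, (∫ x in Icc a y, φ x) * (Icc a b).indicator ψ y := by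
        simp_rw [hind, MeasureTheory.integral_mul_const, integral_indicator measurableSet_Icc]
    _ = ∫ y in Icc a b, (∫ x in Icc a y, φ x) * ψ y := by
        rw [← integral_indicator measurableSet_Icc]
        congr 1 with y
        rw [indicator_mul_right]
    _ = ∫ y in a..b, (∫ x in a..y, φ x) * ψ y := by
        rw [integral_Icc_eq_integral_Ioc, intervalIntegral.integral_of_le hab]
        refine setIntegral_congr_fun measurableSet_Ioc fun y hy => ?_
        rw [intervalIntegral.integral_of_le hy.1.le, integral_Icc_eq_integral_Ioc]

end Simplex

section CommPiece

open intervalIntegral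

variable {f g f₁ f₂ g₁ g₂ : ℝ → ℂ}

theorem commPiece_eqOn_Ioo_zero_one : EqOn (commPiece f g) f (Ioo 0 1) :=
  fun t ht => by unfold commPiece; split_ifs <;> grind

theorem commPiece_eqOn_Ioo_one_two : EqOn (commPiece f g) (fun t => g (t - 1)) (Ioo 1 2) :=
  fun t ht => by unfold commPiece; split_ifs <;> grind

theorem commPiece_eqOn_Ioo_two_three : EqOn (commPiece f g) (fun t => -f (3 - t)) (Ioo 2 3) :=
  fun t ht => by unfold commPiece; split_ifs <;> grind

theorem commPiece_eqOn_Ioo_three_four : EqOn (commPiece f g) (fun t => -g (4 - t)) (Ioo 3 4) :=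
  fun t ht => by unfold commPiece; split_ifs <;> grind

theorem intervalIntegrable_commPiece (hf : IntervalIntegrable f volume 0 1)
    (hg : IntervalIntegrable g volume 0 1) :
    IntervalIntegrable (commPiece f g) volume 0 1 ∧ IntervalIntegrable (commPiece f g) volume 1 2 ∧
      IntervalIntegrable (commPiece f g) volume 2 3 ∧
        IntervalIntegrable (commPiece f g) volume 3 4 := by
  have h₁ := hg.comp_sub_right 1
  have h₂ := (hf.comp_sub_left 3).neg.symm
  have h₃ := (hg.comp_sub_left 4).neg.symm
  norm_num at h₁ h₂ h₃
  refine ⟨hf.congr_uIoo ?_, h₁.congr_uIoo ?_, h₂.congr_uIoo ?_, h₃.congr_uIoo ?_⟩ <;>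
    rw [uIoo_of_le (by norm_num)]
  exacts [commPiece_eqOn_Ioo_zero_one.symm, commPiece_eqOn_Ioo_one_two.symm,
    commPiece_eqOn_Ioo_two_three.symm, commPiece_eqOn_Ioo_three_four.symm]

theorem integrableOn_commPiece (hf : IntervalIntegrable f volume 0 1)
    (hg : IntervalIntegrable g volume 0 1) : IntegrableOn (commPiece f g) (Icc 0 4) := by
  obtain ⟨h₀, h₁, h₂, h₃⟩ := intervalIntegrable_commPiece hf hg
  exact (intervalIntegrable_iff_integrableOn_Icc_of_le (by norm_num)).1
    (((h₀.trans h₁).trans h₂).trans h₃)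

theorem integral_commPiece_zero_one : ∫ t in 0..1, commPiece f g t = ∫ t in 0..1, f t :=
  integral_congr_Ioo_of_le zero_le_one commPiece_eqOn_Ioo_zero_one

theorem integral_commPiece_one_two : ∫ t in 1..2, commPiece f g t = ∫ t in 0..1, g t := by
  rw [integral_congr_Ioo_of_le one_le_two commPiece_eqOn_Ioo_one_two,
    integral_comp_sub_right fun t => g t]
  norm_num

theorem integral_commPiece_two_three : ∫ t in 2..3, commPiece f g t = -∫ t in 0..1, f t := by
  rw [integral_congr_Ioo_of_le (by norm_num) commPiece_eqOn_Ioo_two_three,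
    intervalIntegral.integral_neg, integral_comp_sub_left fun t => f t]
  norm_num

theorem integral_commPiece_three_four : ∫ t in 3..4, commPiece f g t = -∫ t in 0..1, g t := by
  rw [integral_congr_Ioo_of_le (by norm_num) commPiece_eqOn_Ioo_three_four,
    intervalIntegral.integral_neg, integral_comp_sub_left fun t => g t]
  norm_num

theorem iteratedIntegral_commPiece_zero_one :
    iteratedIntegral (commPiece f₁ g₁) (commPiece f₂ g₂) 0 1 = iteratedIntegral f₁ f₂ 0 1 :=
  iteratedIntegral_congr zero_le_one commPiece_eqOn_Ioo_zero_one commPiece_eqOn_Ioo_zero_one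

theorem iteratedIntegral_commPiece_one_two :
    iteratedIntegral (commPiece f₁ g₁) (commPiece f₂ g₂) 1 2 = iteratedIntegral g₁ g₂ 0 1 := by
  rw [iteratedIntegral_congr one_le_two commPiece_eqOn_Ioo_one_two commPiece_eqOn_Ioo_one_two,
    iteratedIntegral_comp_sub_right]
  norm_num

theorem iteratedIntegral_commPiece_two_three (hf₁ : IntervalIntegrable f₁ volume 0 1)
    (hf₂ : IntervalIntegrable f₂ volume 0 1) :
    iteratedIntegral (commPiece f₁ g₁) (commPiece f₂ g₂) 2 3 =
      (∫ t in 0..1, f₁ t) * (∫ t in 0..1, f₂ t) - iteratedIntegral f₁ f₂ 0 1 := by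
  rw [iteratedIntegral_congr (by norm_num) commPiece_eqOn_Ioo_two_three
    commPiece_eqOn_Ioo_two_three, iteratedIntegral_comp_sub_left 3 (by norm_num [hf₁])
    (by norm_num [hf₂])]
  norm_num

theorem iteratedIntegral_commPiece_three_four (hg₁ : IntervalIntegrable g₁ volume 0 1)
    (hg₂ : IntervalIntegrable g₂ volume 0 1) :
    iteratedIntegral (commPiece f₁ g₁) (commPiece f₂ g₂) 3 4 =
      (∫ t in 0..1, g₁ t) * (∫ t in 0..1, g₂ t) - iteratedIntegral g₁ g₂ 0 1 := by
  rw [iteratedIntegral_congr (by norm_num) commPiece_eqOn_Ioo_three_four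
    commPiece_eqOn_Ioo_three_four, iteratedIntegral_comp_sub_left 4 (by norm_num [hg₁])
    (by norm_num [hg₂])]
  norm_num

theorem iteratedIntegral_commPiece (hf₁ : IntervalIntegrable f₁ volume 0 1)
    (hf₂ : IntervalIntegrable f₂ volume 0 1) (hg₁ : IntervalIntegrable g₁ volume 0 1)
    (hg₂ : IntervalIntegrable g₂ volume 0 1) :
    iteratedIntegral (commPiece f₁ g₁) (commPiece f₂ g₂) 0 4 =
      (∫ t in 0..1, f₁ t) * (∫ t in 0..1, g₂ t) - (∫ t in 0..1, g₁ t) * (∫ t in 0..1, f₂ t) := by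
  obtain ⟨h₁₀, h₁₁, h₁₂, h₁₃⟩ := intervalIntegrable_commPiece hf₁ hg₁
  obtain ⟨h₂₀, h₂₁, h₂₂, h₂₃⟩ := intervalIntegrable_commPiece hf₂ hg₂
  rw [iteratedIntegral_add_adjacent_intervals ((h₁₀.trans h₁₁).trans h₁₂) h₁₃
      ((h₂₀.trans h₂₁).trans h₂₂) h₂₃,
    iteratedIntegral_add_adjacent_intervals (h₁₀.trans h₁₁) h₁₂ (h₂₀.trans h₂₁) h₂₂,
    iteratedIntegral_add_adjacent_intervals h₁₀ h₁₁ h₂₀ h₂₁,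
    ← integral_add_adjacent_intervals (h₁₀.trans h₁₁) h₁₂,
    ← integral_add_adjacent_intervals h₁₀ h₁₁,
    iteratedIntegral_commPiece_zero_one, iteratedIntegral_commPiece_one_two,
    iteratedIntegral_commPiece_two_three hf₁ hf₂, iteratedIntegral_commPiece_three_four hg₁ hg₂]
  simp only [integral_commPiece_zero_one, integral_commPiece_one_two,
    integral_commPiece_two_three, integral_commPiece_three_four]
  ring

end CommPiece

/-- the length-two iterated integral along the commutator
concatenation equals the determinant of periods:
`∫_{0 ≤ t₁ ≤ t₂ ≤ 4} h₁(t₁)h₂(t₂) dt₁dt₂ = (∫₀¹f₁)(∫₀¹g₂) − (∫₀¹g₁)(∫₀¹f₂)`. -/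
theorem stmt10 (f₁ f₂ g₁ g₂ : ℝ → ℂ)
    (hf₁ : ContinuousOn f₁ (Set.Icc 0 1)) (hf₂ : ContinuousOn f₂ (Set.Icc 0 1))
    (hg₁ : ContinuousOn g₁ (Set.Icc 0 1)) (hg₂ : ContinuousOn g₂ (Set.Icc 0 1)) :
    simplexIntegral 2 ![commPiece f₁ g₁, commPiece f₂ g₂] 0 4 =
      (∫ t in (0 : ℝ)..1, f₁ t) * (∫ t in (0 : ℝ)..1, g₂ t) -
        (∫ t in (0 : ℝ)..1, g₁ t) * (∫ t in (0 : ℝ)..1, f₂ t) := by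
  have hf₁' := hf₁.intervalIntegrable_of_Icc (μ := volume) zero_le_one
  have hf₂' := hf₂.intervalIntegrable_of_Icc (μ := volume) zero_le_one
  have hg₁' := hg₁.intervalIntegrable_of_Icc (μ := volume) zero_le_one
  have hg₂' := hg₂.intervalIntegrable_of_Icc (μ := volume) zero_le_one
  rw [simplexIntegral_two, setIntegral_triangle_eq_iteratedIntegral (by norm_num)
    (integrableOn_commPiece hf₁' hg₁') (integrableOn_commPiece hf₂' hg₂')]
  exact iteratedIntegral_commPiece hf₁' hf₂' hg₁' hg₂'
end
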